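/- arXiv:1110.0168 — 2 statements merged into one kernel-verified Lean document; each statement's English description precedes it below -/
import Mathlib

section
/- Fix real parameters (C_{j,i})_{i,j=1}^6 satisfying the one-sidedness condition C_{j,i} = 0 whenever i ∉ {j−1, j, j+1} (indices modulo 6). Then the reconstructed potential V^i(g) := V((Σ_{i=1}^6 C_{j,i} g_i)_{j=1}^6) satisfies the local energy consistency V^i(F𝐚) = V(F𝐚) for every F ∈ ℝ^{2×2} and every potential V ∈ 𝒱 if and only if C_{j,j−1} = C_{j,j+1} = 1 − C_{j,j} for all j = 1, …, 6 (indices modulo 6). -/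
open Real
open scoped BigOperators Classical ENNReal

noncomputable section

namespace AC

/-- The plane `ℝ²` with the Euclidean norm. -/
abbrev E2 := EuclideanSpace ℝ (Fin 2)

/-- `2 × 2` real matrices. -/
abbrev Mat2 := Matrix (Fin 2) (Fin 2) ℝ

def toE2 (v : Fin 2 → ℝ) : E2 := WithLp.toLp 2 v

/-- The lattice directions `a_j = Q6^(j-1) a_1`, `Q6` the rotation by `π/3`. -/
def avec (j : ℤ) : E2 :=
  toE2 ![Real.cos (((j : ℝ) - 1) * (Real.pi / 3)), Real.sin (((j : ℝ) - 1) * (Real.pi / 3))]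

/-- The volume `Ω₀ = √3/2` of a primitive cell. -/
def Om0 : ℝ := Real.sqrt 3 / 2

/-- `𝐚 = (a_1, …, a_6)`. -/
def aFam : Fin 6 → E2 := fun j => avec ((j : ℕ) + 1)

/-- Matrix-vector multiplication on `E2`. -/
def mvec (F : Mat2) (v : E2) : E2 := toE2 fun i => ∑ k, F i k * v k

/-- `F𝐚 = (F a_1, …, F a_6)`. -/
def Famat (F : Mat2) : Fin 6 → E2 := fun j => mvec F (aFam j)

/-- Lattice coordinates (w.r.t. the basis `a_1, a_2`) of `a_j` (indices mod 6). -/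
def ed (j : ℤ) : ℤ × ℤ :=
  match (j % 6).toNat with
  | 1 => (1, 0)
  | 2 => (0, 1)
  | 3 => (-1, 1)
  | 4 => (-1, 0)
  | 5 => (0, -1)
  | _ => (1, -1)

/-- The lattice point `n₁ a₁ + n₂ a₂`; `ℒ = emb '' (ℤ × ℤ)`. -/
def emb (n : ℤ × ℤ) : E2 := (n.1 : ℝ) • avec 1 + (n.2 : ℝ) • avec 2

/-- Forward finite difference `D_j v(x) = v(x + a_j) - v(x)` in lattice coordinates. -/
def Dd (j : ℤ) (v : ℤ × ℤ → E2) (n : ℤ × ℤ) : E2 := v (n + ed j) - v n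

/-- `Dv(x) = (D_1 v(x), …, D_6 v(x))`. -/
def Dfam (y : ℤ × ℤ → E2) (n : ℤ × ℤ) : Fin 6 → E2 := fun j => Dd ((j : ℕ) + 1) y n

/-- Euclidean dot product. -/
def dotE (v w : E2) : ℝ := ∑ i, v i * w i

/-- Frobenius inner product `A : B`. -/
def frobI (A B : Mat2) : ℝ := ∑ i, ∑ k, A i k * B i k

/-- Frobenius norm. -/
def frobN (A : Mat2) : ℝ := Real.sqrt (∑ i, ∑ k, (A i k) ^ 2)

/-- Outer product `v ⊗ w`. -/
def outer (v w : E2) : Mat2 := fun i k => v i * w k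

/-- The element of `(ℝ²)⁶` with `k`-th standard basis vector in slot `j` and `0` elsewhere. -/
def unitv (j : Fin 6) (k : Fin 2) : Fin 6 → E2 := fun i => if i = j then toE2 (Pi.single k 1) else 0

/-- Partial gradient `∂_j V(g) ∈ ℝ²` of `V` with respect to its `j`-th argument. -/
def pd (V : (Fin 6 → E2) → ℝ) (j : Fin 6) (g : Fin 6 → E2) : E2 :=
  toE2 fun k => deriv (fun t : ℝ => V (g + t • unitv j k)) 0

/-- Second partial derivative `∂_{ij} V(g) ∈ ℝ^{2×2}`. -/
def pd2 (V : (Fin 6 → E2) → ℝ) (i j : Fin 6) (g : Fin 6 → E2) : Mat2 :=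
  fun k l => deriv (fun t : ℝ => pd V j (g + t • unitv i k) l) 0

/-- Third partial derivative `∂_{ijk} V(g)`. -/
def pd3 (V : (Fin 6 → E2) → ℝ) (i j k : Fin 6) (g : Fin 6 → E2) : Fin 2 → Fin 2 → Fin 2 → ℝ :=
  fun p q r => deriv (fun t : ℝ => pd2 V j k (g + t • unitv i p) q r) 0

/-- Operator norm of a matrix viewed as a bilinear form on `ℝ²`. -/
def matOpNorm (A : Mat2) : ℝ :=
  sSup {r : ℝ | ∃ h1 h2 : E2, ‖h1‖ = 1 ∧ ‖h2‖ = 1 ∧ r = ∑ k, ∑ l, A k l * h1 k * h2 l}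

/-- Norm of a trilinear form on `ℝ²`. -/
def t3norm (B : Fin 2 → Fin 2 → Fin 2 → ℝ) : ℝ :=
  sSup {r : ℝ | ∃ h1 h2 h3 : E2, ‖h1‖ = 1 ∧ ‖h2‖ = 1 ∧ ‖h3‖ = 1 ∧
    r = ∑ p, ∑ q, ∑ s, B p q s * h1 p * h2 q * h3 s}

/-- `M₂ = Σ_{i,j} sup_g ‖∂_{ij}V(g)‖`. -/
def M2 (V : (Fin 6 → E2) → ℝ) : ℝ :=
  ∑ i : Fin 6, ∑ j : Fin 6, ⨆ g : Fin 6 → E2, matOpNorm (pd2 V i j g)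

/-- `M₃ = Σ_{i,j,k} sup_g ‖∂_{ijk}V(g)‖`. -/
def M3 (V : (Fin 6 → E2) → ℝ) : ℝ :=
  ∑ i : Fin 6, ∑ j : Fin 6, ∑ k : Fin 6, ⨆ g : Fin 6 → E2, t3norm (pd3 V i j k g)

/-- Finiteness of `M₂`. -/
def M2fin (V : (Fin 6 → E2) → ℝ) : Prop :=
  ∀ i j : Fin 6, BddAbove (Set.range fun g : Fin 6 → E2 => matOpNorm (pd2 V i j g))

/-- Finiteness of `M₃`. -/
def M3fin (V : (Fin 6 → E2) → ℝ) : Prop :=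
  ∀ i j k : Fin 6, BddAbove (Set.range fun g : Fin 6 → E2 => t3norm (pd3 V i j k g))

/-- The class `𝒱`: `C³` potentials with the point symmetry `V((-g_{j+3})_j) = V(g)`. -/
def memV (V : (Fin 6 → E2) → ℝ) : Prop :=
  ContDiff ℝ 3 V ∧ ∀ g : Fin 6 → E2, V (fun j => -g (j + 3)) = V g

/-- Cauchy–Born stored energy `W(F) = V(F𝐚)/Ω₀`. -/
def Wf (V : (Fin 6 → E2) → ℝ) (F : Mat2) : ℝ := V (Famat F) / Om0

/-- `∂W(F) ∈ ℝ^{2×2}`. -/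
def DW (V : (Fin 6 → E2) → ℝ) (F : Mat2) : Mat2 :=
  fun i k => deriv (fun t : ℝ => Wf V (F + t • Matrix.single i k 1)) 0

/-- The matrix `G` with `G b₁ = v₁`, `G b₂ = v₂` (for linearly independent `b₁, b₂`). -/
def solve2 (b1 b2 v1 v2 : E2) : Mat2 := fun i k =>
  (if k = 0 then v1 i * b2 1 - v2 i * b1 1 else v2 i * b1 0 - v1 i * b2 0) /
    (b1 0 * b2 1 - b1 1 * b2 0)

/-- Triangles of the canonical triangulation `𝒯`: `(n, true)` is the upward triangle
with vertices `n, n+a₁, n+a₂`, and `(n, false)` the downward triangle with vertices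
`n, n+a₁, n+a₆` (in lattice coordinates). -/
abbrev Tri := (ℤ × ℤ) × Bool

/-- The gradient `∂_T y` of the piecewise affine interpolant of `y` on `T`. -/
def triGrad (y : ℤ × ℤ → E2) (T : Tri) : Mat2 :=
  if T.2 then solve2 (avec 1) (avec 2) (Dd 1 y T.1) (Dd 2 y T.1)
  else solve2 (avec 1) (avec 6) (Dd 1 y T.1) (Dd 6 y T.1)

/-- The vertices `T ∩ ℒ` of a triangle, in lattice coordinates. -/
def triVerts (T : Tri) : Finset (ℤ × ℤ) :=
  if T.2 then {T.1, T.1 + (1, 0), T.1 + (0, 1)} else {T.1, T.1 + (1, 0), T.1 + (1, -1)}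

/-- `x_{T,j}`: the unique lattice point with `x_{T,j}, x_{T,j} + a_{j+1} ∈ T`
(here `j : Fin 6` labels the direction `a_{j+1}`). -/
def xT (T : Tri) (j : Fin 6) : ℤ × ℤ :=
  T.1 + (if T.2 then
    (match (j : ℕ) with
     | 0 => ((0 : ℤ), (0 : ℤ)) | 1 => (0, 0) | 2 => (1, 0) | 3 => (1, 0) | 4 => (0, 1) | _ => (0, 1))
  else
    (match (j : ℕ) with
     | 0 => ((0 : ℤ), (0 : ℤ)) | 1 => (1, -1) | 2 => (1, -1) | 3 => (1, 0) | 4 => (1, 0) | _ => (0, 0)))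

/-- The neighbouring triangle `T_j` of `T` sharing the edge with direction `a_{j+1}`. -/
def nbr (T : Tri) (j : Fin 6) : Tri :=
  if T.2 then
    (T.1 + (match (j : ℕ) % 3 with | 0 => ((0 : ℤ), (0 : ℤ)) | 1 => (-1, 1) | _ => (0, 1)), false)
  else
    (T.1 + (match (j : ℕ) % 3 with | 0 => ((0 : ℤ), (0 : ℤ)) | 1 => (1, -1) | _ => (0, -1)), true)

/-- The triangle `T_{x,j} = conv{x, x + a_j, x + a_{j+1}}` (index `j` mod 6). -/
def Txj (x : ℤ × ℤ) (j : ℤ) : Tri :=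
  match (j % 6).toNat with
  | 1 => (x, true)
  | 2 => (x + (-1, 1), false)
  | 3 => (x + (-1, 0), true)
  | 4 => (x + (-1, 0), false)
  | 5 => (x + (0, -1), true)
  | _ => (x, false)

/-- The Cauchy–Born site potential `V^c(g) = (Ω₀/6) Σ_j W(∂_{T_{x,j}} y)` as a function
of the six differences `g = Dy(x)`. -/
def Vc (V : (Fin 6 → E2) → ℝ) (g : Fin 6 → E2) : ℝ :=
  Om0 / 6 * ∑ j : Fin 6, Wf V (solve2 (avec ((j : ℕ) + 1)) (avec ((j : ℕ) + 2)) (g j) (g (j + 1)))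

/-- The atomistic stress `Σa(y;T)`. -/
def Sa (V : (Fin 6 → E2) → ℝ) (y : ℤ × ℤ → E2) (T : Tri) : Mat2 :=
  Om0⁻¹ • ∑ j : Fin 6, outer (pd V j (Dfam y (xT T j))) (aFam j)

/-- The continuum stress `Σc¹(y;T) = ∂W(∂_T y)`. -/
def Sc1 (V : (Fin 6 → E2) → ℝ) (y : ℤ × ℤ → E2) (T : Tri) : Mat2 := DW V (triGrad y T)

/-- The continuum stress `Σc²(y;T)`. -/
def Sc2 (V : (Fin 6 → E2) → ℝ) (y : ℤ × ℤ → E2) (T : Tri) : Mat2 :=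
  Om0⁻¹ • ∑ j : Fin 6, (2 : ℝ)⁻¹ •
    outer (pd V j (Famat (triGrad y T)) + pd V j (Famat (triGrad y (nbr T j)))) (aFam j)

/-- The continuum stress `Σc³(y;T)`. -/
def Sc3 (V : (Fin 6 → E2) → ℝ) (y : ℤ × ℤ → E2) (T : Tri) : Mat2 :=
  Om0⁻¹ • ∑ j : Fin 6, outer (pd (Vc V) j (Dfam y (xT T j))) (aFam j)

/-- The interface region `ℐ` determined by the atomistic region `𝒜`. -/
def interf (A : Set (ℤ × ℤ)) : Set (ℤ × ℤ) :=
  {x | x ∉ A ∧ ∃ j : Fin 6, x + ed ((j : ℕ) + 1) ∈ A}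

/-- The continuum region `𝒞 = ℒ ∖ (𝒜 ∪ ℐ)`. -/
def contR (A : Set (ℤ × ℤ)) : Set (ℤ × ℤ) := {x | x ∉ A ∧ x ∉ interf A}

/-- The reconstructed interface potential `V^i(g) = V((Σ_i C_{j,i} g_i)_j)`. -/
def Vi (V : (Fin 6 → E2) → ℝ) (Cp : Fin 6 → Fin 6 → ℝ) (g : Fin 6 → E2) : ℝ :=
  V fun j => ∑ i : Fin 6, Cp j i • g i

/-- The hybrid site potential `V^ac_x`. -/
def Vac (V : (Fin 6 → E2) → ℝ) (C : ℤ × ℤ → Fin 6 → Fin 6 → ℝ) (A : Set (ℤ × ℤ))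
    (x : ℤ × ℤ) : (Fin 6 → E2) → ℝ :=
  if x ∈ A then V else if x ∈ interf A then Vi V (C x) else Vc V

/-- First variation `⟨δE_a(y), u⟩` of the atomistic energy. -/
def dEa (V : (Fin 6 → E2) → ℝ) (y u : ℤ × ℤ → E2) : ℝ :=
  ∑ᶠ n : ℤ × ℤ, ∑ j : Fin 6, dotE (pd V j (Dfam y n)) (Dfam u n j)

/-- First variation `⟨δE_c(y), u⟩` of the Cauchy–Born energy. -/
def dEc (V : (Fin 6 → E2) → ℝ) (y u : ℤ × ℤ → E2) : ℝ :=
  ∑ᶠ T : Tri, Om0 / 2 * frobI (DW V (triGrad y T)) (triGrad u T)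

/-- First variation `⟨δE_ac(y), u⟩` of the a/c coupling energy. -/
def dEac (V : (Fin 6 → E2) → ℝ) (C : ℤ × ℤ → Fin 6 → Fin 6 → ℝ) (A : Set (ℤ × ℤ))
    (y u : ℤ × ℤ → E2) : ℝ :=
  ∑ᶠ n : ℤ × ℤ, ∑ i : Fin 6, dotE (pd (Vac V C A n) i (Dfam y n)) (Dfam u n i)

/-- The a/c stress `Σac(y;T)`. -/
def Sac (V : (Fin 6 → E2) → ℝ) (C : ℤ × ℤ → Fin 6 → Fin 6 → ℝ) (A : Set (ℤ × ℤ))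
    (y : ℤ × ℤ → E2) (T : Tri) : Mat2 :=
  Om0⁻¹ • ∑ j : Fin 6, outer (pd (Vac V C A (xT T j)) j (Dfam y (xT T j))) (aFam j)

/-- `u ∈ 𝒰₀`: finitely supported displacement. -/
def FinSupp (u : ℤ × ℤ → E2) : Prop := (Function.support u).Finite

/-- `y ∈ 𝒴₀`: deformation with `y - id` finitely supported. -/
def inY0 (y : ℤ × ℤ → E2) : Prop := (Function.support fun n => y n - emb n).Finite

/-- The homogeneous deformation `y_F(x) = Fx`. -/
def yhom (F : Mat2) : ℤ × ℤ → E2 := fun n => mvec F (emb n)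

/-- One-sidedness: `C_{j,i} = 0` unless `i ∈ {j-1, j, j+1}` (mod 6). -/
def oneSided (Cp : Fin 6 → Fin 6 → ℝ) : Prop :=
  ∀ j i : Fin 6, i ≠ j - 1 → i ≠ j → i ≠ j + 1 → Cp j i = 0

/-- Local energy consistency: `C_{j,j-1} = C_{j,j+1} = 1 - C_{j,j}`. -/
def eCons (Cp : Fin 6 → Fin 6 → ℝ) : Prop :=
  ∀ j : Fin 6, Cp j (j - 1) = 1 - Cp j j ∧ Cp j (j + 1) = 1 - Cp j j

/-- The coefficients corresponding to the atomistic site potential (`C_{x,j} = 1`). -/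
def atomC : Fin 6 → Fin 6 → ℝ := fun j i => if i = j then 1 else 0

/-- The coefficients corresponding to the Cauchy–Born site potential (`C_{x,j} = 2/3`). -/
def cbC : Fin 6 → Fin 6 → ℝ := fun j i =>
  if i = j then 2 / 3 else if i = j - 1 ∨ i = j + 1 then 1 / 3 else 0

/-- The negative force `-f_ac(x; y_F) = Σ_{j,i} (C_{x-a_i,j,i} - C_{x,j,i}) ∂_j V(F𝐚)`. -/
def forceSum (C : ℤ × ℤ → Fin 6 → Fin 6 → ℝ) (V : (Fin 6 → E2) → ℝ) (F : Mat2)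
    (x : ℤ × ℤ) : E2 :=
  ∑ j : Fin 6, ∑ i : Fin 6, (C (x - ed ((i : ℕ) + 1)) j i - C x j i) • pd V j (Famat F)

/-- The force consistency condition (5.2) on the coefficients. -/
def fCons (C : ℤ × ℤ → Fin 6 → Fin 6 → ℝ) : Prop :=
  ∀ j : Fin 6, (j : ℕ) < 3 → ∀ x : ℤ × ℤ,
    ∑ i : Fin 6, (C (x - ed ((i : ℕ) + 1)) j i - C (x - ed ((i : ℕ) + 1)) (j + 3) i
      - C x j i + C x (j + 3) i) = 0

/-- `|D²y(x)| = max_{i,j} |D_i D_j y(x)|`. -/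
def D2n (y : ℤ × ℤ → E2) (n : ℤ × ℤ) : ℝ :=
  ⨆ i : Fin 6, ⨆ j : Fin 6, ‖Dd ((i : ℕ) + 1) (Dd ((j : ℕ) + 1) y) n‖

/-- `|D³y(x)| = max_{i,j,k} |D_i D_j D_k y(x)|`. -/
def D3n (y : ℤ × ℤ → E2) (n : ℤ × ℤ) : ℝ :=
  ⨆ i : Fin 6, ⨆ j : Fin 6, ⨆ k : Fin 6,
    ‖Dd ((i : ℕ) + 1) (Dd ((j : ℕ) + 1) (Dd ((k : ℕ) + 1) y)) n‖

/-- `ℓ^p` norm of a lattice function over a subset `S ⊆ ℒ`. -/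
def lpNormS (p : ℝ≥0∞) (f : ℤ × ℤ → ℝ) (S : Set (ℤ × ℤ)) : ℝ :=
  if p = ⊤ then ⨆ x : S, |f x| else (∑ᶠ x ∈ S, |f x| ^ p.toReal) ^ (1 / p.toReal)

/-- `‖∂u‖_{L^q}` for the piecewise affine interpolant. -/
def gradLp (q : ℝ≥0∞) (u : ℤ × ℤ → E2) : ℝ :=
  if q = ⊤ then ⨆ T : Tri, frobN (triGrad u T)
  else (∑ᶠ T : Tri, Om0 / 2 * frobN (triGrad u T) ^ q.toReal) ^ (1 / q.toReal)

/-- `𝒯_𝒜`: triangles with `T ∩ (ℐ ∪ 𝒞) = ∅`. -/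
def TA (A : Set (ℤ × ℤ)) : Set Tri := {T | ∀ n ∈ triVerts T, n ∉ interf A ∧ n ∉ contR A}

/-- `𝒯_𝒞`: triangles with `T ∩ (ℐ ∪ 𝒜) = ∅`. -/
def TC (A : Set (ℤ × ℤ)) : Set Tri := {T | ∀ n ∈ triVerts T, n ∉ interf A ∧ n ∉ A}

/-- `𝒯_ℐ = 𝒯 ∖ (𝒯_𝒜 ∪ 𝒯_𝒞)`. -/
def TI (A : Set (ℤ × ℤ)) : Set Tri := {T | T ∉ TA A ∧ T ∉ TC A}

/-- The midpoint of the edge `(x, x + a_j)`. -/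
def edgeMid (x : ℤ × ℤ) (j : ℤ) : E2 := emb x + (2 : ℝ)⁻¹ • avec j

/-- The edge `(x, x+a_j)` belongs to `𝔉_𝒜` (it lies in a triangle of `𝒯_𝒜`). -/
def edgeInA (A : Set (ℤ × ℤ)) (x : ℤ × ℤ) (j : ℤ) : Prop :=
  Txj x j ∈ TA A ∨ Txj x (j - 1) ∈ TA A

/-- The edge `(x, x+a_j)` belongs to `𝔉_𝒞`. -/
def edgeInC (A : Set (ℤ × ℤ)) (x : ℤ × ℤ) (j : ℤ) : Prop :=
  Txj x j ∈ TC A ∨ Txj x (j - 1) ∈ TC A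

/-- Rotation by `π/2`. -/
def Jmat : Mat2 := !![0, -1; 1, 0]

/-- Midpoint continuity of a piecewise affine field: membership in `N1(𝒯)²`. -/
def midCont (ψ : Tri → E2 → E2) : Prop :=
  ∀ (x : ℤ × ℤ) (j : ℤ), ψ (Txj x j) (edgeMid x j) = ψ (Txj x (j - 1)) (edgeMid x j)

/-- `ψ` is piecewise affine with Jacobian `G T` on each triangle `T`. -/
def affWith (ψ : Tri → E2 → E2) (G : Tri → Mat2) : Prop :=
  ∀ (T : Tri) (z w : E2), ψ T z - ψ T w = mvec (G T) (z - w)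

/-- Assumption 4.1: every interface atom has exactly two interface neighbours and
at least one continuum neighbour. -/
def InterfaceOK (A : Set (ℤ × ℤ)) : Prop :=
  ∀ x ∈ interf A,
    ({j : Fin 6 | x + ed ((j : ℕ) + 1) ∈ interf A}).ncard = 2 ∧
    ∃ j : Fin 6, x + ed ((j : ℕ) + 1) ∈ contR A

/-- The patch test: local energy consistency and local force consistency for all `V ∈ 𝒱`. -/
def PatchTest (C : ℤ × ℤ → Fin 6 → Fin 6 → ℝ) (A : Set (ℤ × ℤ)) : Prop :=
  (∀ V, memV V → ∀ F : Mat2, ∀ x ∈ interf A, Vi V (C x) (Famat F) = V (Famat F)) ∧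
  (∀ V, memV V → ∀ F : Mat2, ∀ u, FinSupp u → dEac V C A (yhom F) u = 0)

/-- The closed triangle `T ⊆ ℝ²`. -/
def triSet (T : Tri) : Set E2 :=
  convexHull ℝ {emb T.1, emb (T.1 + (1, 0)), emb (T.1 + (if T.2 then ((0 : ℤ), (1 : ℤ)) else (1, -1)))}

/-- The closed edge `[x, x + a_j] ⊆ ℝ²`. -/
def edgeSeg (x : ℤ × ℤ) (j : ℤ) : Set E2 := segment ℝ (emb x) (emb (x + ed j))

/-- The atomistic region of the flat interface: `{x ∈ ℒ : x₂ < 0}`. -/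
def flatA : Set (ℤ × ℤ) := {n | emb n 1 < 0}

/-- The extended interface region `ℐ^ext = {x ∈ ℒ : dist(x, ℐ) ≤ 1}`. -/
def Iext (A : Set (ℤ × ℤ)) : Set (ℤ × ℤ) := {x | ∃ z ∈ interf A, ‖emb x - emb z‖ ≤ 1}

/-- Embedding `Fin 3 → Fin 6`. -/
def jlift (j : Fin 3) : Fin 6 := ⟨(j : ℕ), by omega⟩

end AC

/-!
If the coefficients reproduce every bond of the reference lattice, `∑ i, C j i • a_i = a_j`, then
by linearity they reproduce every `F𝐚`, so `V^i(F𝐚) = V(F𝐚)`. Conversely, `g ↦ ∑ j, ‖g_j - a_j‖²`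
lies in `𝒱` (because `a_{j+3} = -a_j`) and vanishes exactly at `𝐚`, so energy consistency at
`F = I` forces `∑ i, C j i • a_i = a_j`. For one-sided coefficients this reads
`C_{j,j-1} a_{j-1} + C_{j,j} a_j + C_{j,j+1} a_{j+1} = a_{j-1} + a_{j+1}`, and since
`a_j = a_{j-1} + a_{j+1}` with `a_{j-1}, a_{j+1}` linearly independent, it is equivalent to
`C_{j,j±1} = 1 - C_{j,j}`.
-/

namespace AC

lemma mvec_eq_toLpLin (F : Mat2) : mvec F = Matrix.toLpLin 2 2 F := rfl

lemma Famat_one : Famat 1 = aFam := by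
  funext j
  simp [Famat, mvec_eq_toLpLin, Matrix.toLpLin_one]

lemma avec_congr {k m : ℤ} (h : k ≡ m [ZMOD 6]) : avec k = avec m := by
  obtain ⟨t, rfl⟩ : ∃ t : ℤ, k = m + 6 * t := ⟨(k - m) / 6, by rw [Int.ModEq] at h; omega⟩
  have harg : (((m + 6 * t : ℤ) : ℝ) - 1) * (π / 3) = ((m : ℝ) - 1) * (π / 3) + t * (2 * π) := by
    push_cast; ring
  rw [avec, harg, cos_add_int_mul_two_pi, sin_add_int_mul_two_pi, avec]

lemma avec_add_three (k : ℤ) : avec (k + 3) = -avec k := by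
  have harg : (((k + 3 : ℤ) : ℝ) - 1) * (π / 3) = ((k : ℝ) - 1) * (π / 3) + π := by
    push_cast; ring
  rw [avec, harg, cos_add_pi, sin_add_pi, avec]
  ext i; fin_cases i <;> simp [toE2]

lemma avec_add_avec_add_two (k : ℤ) : avec k + avec (k + 2) = avec (k + 1) := by
  have h₀ : ((k : ℝ) - 1) * (π / 3) = (((k + 1 : ℤ) : ℝ) - 1) * (π / 3) - π / 3 := by
    push_cast; ring
  have h₂ : (((k + 2 : ℤ) : ℝ) - 1) * (π / 3) = (((k + 1 : ℤ) : ℝ) - 1) * (π / 3) + π / 3 := by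
    push_cast; ring
  rw [avec, avec, avec, h₀, h₂]
  ext i; fin_cases i <;> simp [toE2, cos_sub, cos_add, sin_sub, sin_add] <;> ring

lemma avec_cross_avec_add_two (k : ℤ) :
    avec k 0 * avec (k + 2) 1 - avec k 1 * avec (k + 2) 0 = √3 / 2 := by
  have harg : (((k + 2 : ℤ) : ℝ) - 1) * (π / 3) = ((k : ℝ) - 1) * (π / 3) + (π - π / 3) := by
    push_cast; ring
  simp only [avec, toE2, harg, PiLp.toLp_apply, Matrix.cons_val_zero, Matrix.cons_val_one,
    cos_add, sin_add, cos_pi_sub, sin_pi_sub, cos_pi_div_three, sin_pi_div_three]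
  linear_combination (√3 / 2) * sin_sq_add_cos_sq (((k : ℝ) - 1) * (π / 3))

lemma eq_zero_of_smul_avec_add_smul_avec_add_two {k : ℤ} {s t : ℝ}
    (h : s • avec k + t • avec (k + 2) = 0) : s = 0 ∧ t = 0 := by
  have hx := congrArg (· 0) h
  have hy := congrArg (· 1) h
  simp only [PiLp.add_apply, PiLp.smul_apply, smul_eq_mul, PiLp.zero_apply] at hx hy
  have hcross := avec_cross_avec_add_two k
  have hdet : √3 / 2 ≠ 0 := by positivity
  constructor
  · refine (mul_eq_zero.1 ?_).resolve_right hdet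
    rw [← hcross]; linear_combination avec (k + 2) 1 * hx - avec (k + 2) 0 * hy
  · refine (mul_eq_zero.1 ?_).resolve_right hdet
    rw [← hcross]; linear_combination avec k 0 * hy - avec k 1 * hx

lemma aFam_eq_avec {j : Fin 6} {k : ℤ} (h : (j : ℤ) + 1 ≡ k [ZMOD 6]) : aFam j = avec k :=
  avec_congr (by simpa using h)

lemma aFam_add_three (j : Fin 6) : aFam (j + 3) = -aFam j := by
  rw [aFam_eq_avec (k := j + 1 + 3), aFam_eq_avec (k := j + 1), ← avec_add_three]
  all_goals unfold Int.ModEq; omega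

lemma aFam_sub_one_add_aFam_add_one (j : Fin 6) : aFam (j - 1) + aFam (j + 1) = aFam j := by
  rw [aFam_eq_avec (k := j), aFam_eq_avec (k := j + 2), aFam_eq_avec (k := j + 1),
    avec_add_avec_add_two]
  all_goals unfold Int.ModEq; omega

lemma eq_zero_of_smul_aFam_sub_one_add_smul_aFam_add_one {j : Fin 6} {s t : ℝ}
    (h : s • aFam (j - 1) + t • aFam (j + 1) = 0) : s = 0 ∧ t = 0 := by
  rw [aFam_eq_avec (k := j), aFam_eq_avec (k := j + 2)] at h
  · exact eq_zero_of_smul_avec_add_smul_avec_add_two h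
  all_goals unfold Int.ModEq; omega

lemma oneSided.sum_smul_eq {M : Type*} [AddCommMonoid M] [Module ℝ M] {Cp : Fin 6 → Fin 6 → ℝ}
    (hos : oneSided Cp) (j : Fin 6) (v : Fin 6 → M) :
    ∑ i, Cp j i • v i = Cp j (j - 1) • v (j - 1) + Cp j j • v j + Cp j (j + 1) • v (j + 1) := by
  have hne : j - 1 ≠ j ∧ j - 1 ≠ j + 1 ∧ j ≠ j + 1 := by omega
  rw [← Finset.sum_subset (Finset.subset_univ {j - 1, j, j + 1}) fun i _ hi => ?_,
    Finset.sum_insert (by simp [hne.1, hne.2.1]), Finset.sum_insert (by simp [hne.2.2]),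
    Finset.sum_singleton, add_assoc]
  simp only [Finset.mem_insert, Finset.mem_singleton, not_or] at hi
  rw [hos j i hi.1 hi.2.1 hi.2.2, zero_smul]

lemma sum_smul_aFam_eq_aFam_iff {Cp : Fin 6 → Fin 6 → ℝ} (hos : oneSided Cp) (j : Fin 6) :
    ∑ i, Cp j i • aFam i = aFam j ↔ Cp j (j - 1) = 1 - Cp j j ∧ Cp j (j + 1) = 1 - Cp j j := by
  rw [hos.sum_smul_eq, ← aFam_sub_one_add_aFam_add_one j]
  constructor
  · intro h
    have hzero : (Cp j (j - 1) + Cp j j - 1) • aFam (j - 1) +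
        (Cp j (j + 1) + Cp j j - 1) • aFam (j + 1) = 0 := by
      rw [← sub_eq_zero] at h
      rw [← h]; module
    obtain ⟨h₁, h₂⟩ := eq_zero_of_smul_aFam_sub_one_add_smul_aFam_add_one hzero
    constructor <;> linarith
  · rintro ⟨h₁, h₂⟩
    rw [h₁, h₂]; module

lemma eCons_iff_forall_sum_smul_aFam_eq {Cp : Fin 6 → Fin 6 → ℝ} (hos : oneSided Cp) :
    eCons Cp ↔ ∀ j, ∑ i, Cp j i • aFam i = aFam j :=
  forall_congr' fun j => (sum_smul_aFam_eq_aFam_iff hos j).symm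

lemma Vi_Famat {Cp : Fin 6 → Fin 6 → ℝ} (V : (Fin 6 → E2) → ℝ) (F : Mat2) :
    Vi V Cp (Famat F) = V fun j => mvec F (∑ i, Cp j i • aFam i) := by
  simp only [Vi, Famat, mvec_eq_toLpLin, map_sum, map_smul]

def sqDistToAFam (g : Fin 6 → E2) : ℝ := ∑ j, ‖g j - aFam j‖ ^ 2

lemma memV_sqDistToAFam : memV sqDistToAFam := by
  refine ⟨ContDiff.sum fun j _ =>
    (contDiff_norm_sq ℝ).comp ((contDiff_apply ℝ E2 j).sub contDiff_const), fun g => ?_⟩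
  refine Fintype.sum_equiv (Equiv.addRight 3) _ _ fun j => ?_
  rw [Equiv.coe_addRight, aFam_add_three, sub_neg_eq_add, ← norm_neg, neg_sub, sub_neg_eq_add,
    add_comm]

lemma sqDistToAFam_eq_zero_iff {g : Fin 6 → E2} : sqDistToAFam g = 0 ↔ g = aFam := by
  simp [sqDistToAFam, Finset.sum_eq_zero_iff_of_nonneg, sub_eq_zero, funext_iff]

lemma sum_smul_aFam_eq_aFam_of_forall_Vi_eq {Cp : Fin 6 → Fin 6 → ℝ}
    (H : ∀ V, memV V → Vi V Cp aFam = V aFam) (j : Fin 6) : ∑ i, Cp j i • aFam i = aFam j := by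
  have h := H _ memV_sqDistToAFam
  rw [(sqDistToAFam_eq_zero_iff (g := aFam)).2 rfl, Vi, sqDistToAFam_eq_zero_iff] at h
  exact congrFun h j

end AC

open AC in
/-- characterisation of local energy consistency (Proposition 3.1). -/
theorem energy_consistency_characterisation
    (Cp : Fin 6 → Fin 6 → ℝ) (hos : oneSided Cp) :
    (∀ V : (Fin 6 → E2) → ℝ, memV V → ∀ F : Mat2, Vi V Cp (Famat F) = V (Famat F)) ↔
      eCons Cp := by
  rw [eCons_iff_forall_sum_smul_aFam_eq hos]
  refine ⟨fun H => sum_smul_aFam_eq_aFam_of_forall_Vi_eq fun V hV => ?_, fun h V _ F => ?_⟩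
  · simpa only [Famat_one] using H V hV 1
  · simp only [Vi_Famat, h]; rfl
end
end

section
/- Let 𝒜 = {x ∈ ℒ : x₂ < 0}, ℐ = {x ∈ ℒ : x₂ = 0}, and 𝒞 = {x ∈ ℒ : x₂ > 0} (a flat interface). Suppose the parameters (C_{x,j,i}), x ∈ ℐ, satisfy the one-sidedness condition and energy consistency, with reduced parameters C_{x,j}, extended to all of ℒ by C_{x,j} := 1 for x ∈ 𝒜 and C_{x,j} := 2/3 for x ∈ 𝒞. Then the force consistency condition Σ_{i=1}^6 ( C_{x−a_i,j,i} − C_{x−a_i,j+3,i} − C_{x,j,i} + C_{x,j+3,i} ) = 0 for all j ∈ {1,2,3} and all x ∈ ℒ holds if and only if C_{x,1} = C_{x+a_1,4} for all x ∈ ℐ and C_{x,j} = C_{x+a_1,j} for all x ∈ ℐ and all j ∈ {2,3,5,6}. -/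
open Real
open scoped BigOperators Classical ENNReal

noncomputable section

namespace AC

/-! Once one-sidedness and energy consistency express `C_{x,j,i}` through the reduced parameters
`C_{x,j}`, the force consistency condition at `x` in direction `j` reads `F_j(x) = F_{j+3}(x)`, where
`F_j(x) = C_{x-a_j,j} - C_{x-a_{j-1},j} - C_{x-a_{j+1},j} + C_{x,j}`. This stencil vanishes wherever the
reduced parameters are constant around `x`, so only the rows `x₂ ∈ {-1, 0, 1}` matter. On the row
`x₂ = 1` the condition is exactly `C_{x,1} = C_{x+a₁,4}` together with the `a₁`-invariance of `C_{x,2}`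
and `C_{x,3}` along `ℐ`; the row `x₂ = -1` gives the same for `C_{x,5}` and `C_{x,6}`; and on `ℐ`
itself the condition is a sum of these. -/

/-- Lattice coordinates of `a_{i+1}`: the `Fin 6` labels are shifted by one from the paper's. -/
def dir (i : Fin 6) : ℤ × ℤ := ed ((i : ℕ) + 1)

lemma dir_eq : dir = ![(1, 0), (0, 1), (-1, 1), (-1, 0), (0, -1), (1, -1)] := by
  funext i; fin_cases i <;> rfl

lemma abs_dir_snd_le_one (i : Fin 6) : |(dir i).2| ≤ 1 := by
  fin_cases i <;> simp [dir_eq]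

lemma Fin.forall_six_val_lt_three {P : Fin 6 → Prop} :
    (∀ j : Fin 6, (j : ℕ) < 3 → P j) ↔ P 0 ∧ P 1 ∧ P 2 := by
  refine ⟨fun h => ⟨h 0 (by decide), h 1 (by decide), h 2 (by decide)⟩, ?_⟩
  rintro ⟨h0, h1, h2⟩ j hj
  fin_cases j <;> simp_all

lemma Fin.forall_six_val_one_two_four_five {P : Fin 6 → Prop} :
    (∀ j : Fin 6, (j : ℕ) = 1 ∨ (j : ℕ) = 2 ∨ (j : ℕ) = 4 ∨ (j : ℕ) = 5 → P j) ↔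
      P 1 ∧ P 2 ∧ P 4 ∧ P 5 := by
  refine ⟨fun h => ⟨h 1 (by decide), h 2 (by decide), h 4 (by decide), h 5 (by decide)⟩, ?_⟩
  rintro ⟨h1, h2, h4, h5⟩ j hj
  fin_cases j <;> simp_all

/-- The parameters `C_{j,i}` with reduced parameters `d j = C_j`, one-sided and energy consistent. -/
def ofReduced (d : Fin 6 → ℝ) : Fin 6 → Fin 6 → ℝ := fun j i =>
  if i = j then d j else if i = j - 1 ∨ i = j + 1 then 1 - d j else 0

lemma oneSided_ofReduced (d : Fin 6 → ℝ) : oneSided (ofReduced d) := by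
  intro j i h₁ h₂ h₃
  simp [ofReduced, h₁, h₂, h₃]

lemma eCons_ofReduced (d : Fin 6 → ℝ) : eCons (ofReduced d) := by
  intro j
  fin_cases j <;> simp +decide [ofReduced]

lemma eq_ofReduced {Cp : Fin 6 → Fin 6 → ℝ} (hos : oneSided Cp) (hec : eCons Cp) :
    Cp = ofReduced fun j => Cp j j := by
  funext j i
  unfold ofReduced
  split_ifs with hj hadj
  · rw [hj]
  · rcases hadj with rfl | rfl
    exacts [(hec j).1, (hec j).2]
  · push Not at hadj
    exact hos j i hadj.1 hj hadj.2

lemma atomC_eq_ofReduced : atomC = ofReduced fun _ => 1 := by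
  funext j i
  simp only [atomC, ofReduced, sub_self, ite_self]

lemma cbC_eq_ofReduced : cbC = ofReduced fun _ => 2 / 3 := by
  funext j i
  norm_num [cbC, ofReduced]

/-- The coefficient `Σ_i (C_{x-a_i,j,i} - C_{x,j,i})` of `∂_j V(F𝐚)` in the force at `x` under `y_F`. -/
def flux (C : ℤ × ℤ → Fin 6 → Fin 6 → ℝ) (x : ℤ × ℤ) (j : Fin 6) : ℝ :=
  ∑ i : Fin 6, (C (x - dir i) j i - C x j i)

lemma fCons_iff_flux (C : ℤ × ℤ → Fin 6 → Fin 6 → ℝ) :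
    fCons C ↔ ∀ j : Fin 6, (j : ℕ) < 3 → ∀ x, flux C x j = flux C x (j + 3) := by
  refine forall₂_congr fun j _ => forall_congr' fun x => ?_
  rw [← sub_eq_zero (a := flux C x j), flux, flux, ← Finset.sum_sub_distrib]
  exact Iff.of_eq (congrArg (· = 0) (Finset.sum_congr rfl fun i _ => by unfold dir; ring))

def reducedFlux (c : ℤ × ℤ → Fin 6 → ℝ) (x : ℤ × ℤ) (j : Fin 6) : ℝ :=
  c (x - dir j) j - c (x - dir (j - 1)) j - c (x - dir (j + 1)) j + c x j

lemma flux_ofReduced (c : ℤ × ℤ → Fin 6 → ℝ) (x : ℤ × ℤ) (j : Fin 6) :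
    flux (fun x => ofReduced (c x)) x j = reducedFlux c x j := by
  fin_cases j <;>
    simp +decide [flux, reducedFlux, ofReduced, Fin.sum_univ_six,
      show (-1 : Fin 6) = 5 from rfl] <;> ring

lemma fCons_ofReduced_iff (c : ℤ × ℤ → Fin 6 → ℝ) :
    fCons (fun x => ofReduced (c x)) ↔
      ∀ x, reducedFlux c x 0 = reducedFlux c x 3 ∧ reducedFlux c x 1 = reducedFlux c x 4 ∧
        reducedFlux c x 2 = reducedFlux c x 5 := by
  simp only [fCons_iff_flux, flux_ofReduced, forall_and]
  exact Fin.forall_six_val_lt_three (P := fun j => ∀ x, reducedFlux c x j = reducedFlux c x (j + 3))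

lemma reducedFlux_eq_zero_of_const {c : ℤ × ℤ → Fin 6 → ℝ} {x : ℤ × ℤ} {j : Fin 6} {κ : ℝ}
    (hnbr : ∀ i, c (x - dir i) j = κ) (hx : c x j = κ) : reducedFlux c x j = 0 := by
  rw [reducedFlux, hnbr, hnbr, hnbr, hx]; ring

section FlatInterface

variable {c : ℤ × ℤ → Fin 6 → ℝ} {a b : ℝ}

lemma reducedFlux_eq_zero_of_two_le_abs (hneg : ∀ x j, x.2 < 0 → c x j = a)
    (hpos : ∀ x j, 0 < x.2 → c x j = b) {x : ℤ × ℤ} (hx : 2 ≤ |x.2|) (j : Fin 6) :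
    reducedFlux c x j = 0 := by
  have hdir := fun i => abs_le.mp (abs_dir_snd_le_one i)
  rcases le_abs'.mp hx with hx | hx
  · exact reducedFlux_eq_zero_of_const (fun i => hneg _ _ (by simp; linarith [hdir i]))
      (hneg _ _ (by linarith))
  · exact reducedFlux_eq_zero_of_const (fun i => hpos _ _ (by simp; linarith [hdir i]))
      (hpos _ _ (by linarith))

lemma reducedFlux_sub_row_one (hpos : ∀ x j, 0 < x.2 → c x j = b) (n : ℤ) :
    reducedFlux c (n, 1) 0 - reducedFlux c (n, 1) 3 = c (n + 1, 0) 3 - c (n, 0) 0 ∧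
    reducedFlux c (n, 1) 1 - reducedFlux c (n, 1) 4 = c (n, 0) 1 - c (n + 1, 0) 1 ∧
    reducedFlux c (n, 1) 2 - reducedFlux c (n, 1) 5 = c (n + 1, 0) 2 - c (n, 0) 2 := by
  refine ⟨?_, ?_, ?_⟩ <;>
    simp +decide [reducedFlux, dir_eq, hpos, show (-1 : Fin 6) = 5 from rfl] <;> ring

lemma reducedFlux_sub_row_neg_one (hneg : ∀ x j, x.2 < 0 → c x j = a) (n : ℤ) :
    reducedFlux c (n, -1) 0 - reducedFlux c (n, -1) 3 = c (n, 0) 3 - c (n - 1, 0) 0 ∧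
    reducedFlux c (n, -1) 1 - reducedFlux c (n, -1) 4 = c (n - 1, 0) 4 - c (n, 0) 4 ∧
    reducedFlux c (n, -1) 2 - reducedFlux c (n, -1) 5 = c (n, 0) 5 - c (n - 1, 0) 5 := by
  refine ⟨?_, ?_, ?_⟩ <;>
    simp +decide [reducedFlux, dir_eq, hneg, show (-1 : Fin 6) = 5 from rfl] <;> ring

lemma reducedFlux_sub_row_zero (hneg : ∀ x j, x.2 < 0 → c x j = a)
    (hpos : ∀ x j, 0 < x.2 → c x j = b) (n : ℤ) :
    reducedFlux c (n, 0) 0 - reducedFlux c (n, 0) 3 =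
      (c (n - 1, 0) 0 - c (n, 0) 3) + (c (n, 0) 0 - c (n + 1, 0) 3) ∧
    reducedFlux c (n, 0) 1 - reducedFlux c (n, 0) 4 =
      (c (n, 0) 1 - c (n - 1, 0) 1) + (c (n + 1, 0) 4 - c (n, 0) 4) ∧
    reducedFlux c (n, 0) 2 - reducedFlux c (n, 0) 5 =
      (c (n, 0) 2 - c (n + 1, 0) 2) + (c (n - 1, 0) 5 - c (n, 0) 5) := by
  refine ⟨?_, ?_, ?_⟩ <;>
    simp +decide [reducedFlux, dir_eq, hneg, hpos, show (-1 : Fin 6) = 5 from rfl] <;> ring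

theorem reducedFlux_balance_iff (hneg : ∀ x j, x.2 < 0 → c x j = a)
    (hpos : ∀ x j, 0 < x.2 → c x j = b) :
    (∀ x, reducedFlux c x 0 = reducedFlux c x 3 ∧ reducedFlux c x 1 = reducedFlux c x 4 ∧
        reducedFlux c x 2 = reducedFlux c x 5) ↔
      (∀ n : ℤ, c (n, 0) 0 = c (n + 1, 0) 3) ∧
      (∀ n : ℤ, ∀ j : Fin 6, (j : ℕ) = 1 ∨ (j : ℕ) = 2 ∨ (j : ℕ) = 4 ∨ (j : ℕ) = 5 →
        c (n, 0) j = c (n + 1, 0) j) := by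
  simp only [Fin.forall_six_val_one_two_four_five]
  constructor
  · intro h
    refine ⟨fun n => ?_, fun n => ?_⟩
    · obtain ⟨r0, -, -⟩ := reducedFlux_sub_row_one hpos n
      linarith [(h (n, 1)).1]
    · obtain ⟨-, r1, r2⟩ := reducedFlux_sub_row_one hpos n
      obtain ⟨-, r4, r5⟩ := reducedFlux_sub_row_neg_one hneg (n + 1)
      simp only [add_sub_cancel_right] at r4 r5
      obtain ⟨-, h1, h2⟩ := h (n, 1)
      obtain ⟨-, h4, h5⟩ := h (n + 1, -1)
      refine ⟨?_, ?_, ?_, ?_⟩ <;> linarith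
  · rintro ⟨h03, hshift⟩ ⟨m, k⟩
    have h03' := h03 (m - 1)
    have hshift' := hshift (m - 1)
    obtain ⟨h1, h2, h4, h5⟩ := hshift m
    obtain ⟨h1', h2', h4', h5'⟩ := hshift'
    simp only [sub_add_cancel] at h03' h1' h2' h4' h5'
    obtain hk | rfl | rfl | rfl | hk : k ≤ -2 ∨ k = -1 ∨ k = 0 ∨ k = 1 ∨ 2 ≤ k := by omega
    · simp only [reducedFlux_eq_zero_of_two_le_abs hneg hpos (x := (m, k)) (by
        rw [abs_of_neg (by omega)]; omega), and_self]
    · obtain ⟨r0, r1, r2⟩ := reducedFlux_sub_row_neg_one hneg m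
      refine ⟨?_, ?_, ?_⟩ <;> linarith
    · obtain ⟨r0, r1, r2⟩ := reducedFlux_sub_row_zero hneg hpos m
      refine ⟨?_, ?_, ?_⟩ <;> linarith [h03 m]
    · obtain ⟨r0, r1, r2⟩ := reducedFlux_sub_row_one hpos m
      refine ⟨?_, ?_, ?_⟩ <;> linarith [h03 m]
    · simp only [reducedFlux_eq_zero_of_two_le_abs hneg hpos (x := (m, k)) (by
        rw [abs_of_pos (by omega)]; omega), and_self]

end FlatInterface

lemma emb_snd (x : ℤ × ℤ) : emb x 1 = x.2 * (√3 / 2) := by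
  simp [emb, avec, toE2, PiLp.add_apply, PiLp.smul_apply]
  norm_num [Real.sin_pi_div_three]

lemma emb_snd_neg_iff {x : ℤ × ℤ} : emb x 1 < 0 ↔ x.2 < 0 := by
  rw [emb_snd, ← neg_pos, ← neg_mul, mul_pos_iff_of_pos_right (by positivity), neg_pos,
    Int.cast_lt_zero]

lemma emb_snd_pos_iff {x : ℤ × ℤ} : 0 < emb x 1 ↔ 0 < x.2 := by
  rw [emb_snd, mul_pos_iff_of_pos_right (by positivity), Int.cast_pos]

lemma emb_snd_eq_zero_iff {x : ℤ × ℤ} : emb x 1 = 0 ↔ x.2 = 0 := by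
  rw [emb_snd, mul_eq_zero_iff_right (by positivity), Int.cast_eq_zero]

lemma forall_snd_eq_zero {P : ℤ × ℤ → Prop} : (∀ x : ℤ × ℤ, x.2 = 0 → P x) ↔ ∀ n, P (n, 0) := by
  simp only [Prod.forall, forall_eq]

end AC
open AC in
/-- characterisation of patch test consistent parameters for the flat
interface `𝒜 = {x₂ < 0}`, `ℐ = {x₂ = 0}`, `𝒞 = {x₂ > 0}` (Proposition 3.4). -/
theorem flat_interface_characterisation
    (C : ℤ × ℤ → Fin 6 → Fin 6 → ℝ)
    (hos : ∀ x : ℤ × ℤ, emb x 1 = 0 → oneSided (C x))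
    (hec : ∀ x : ℤ × ℤ, emb x 1 = 0 → eCons (C x))
    (hA : ∀ x : ℤ × ℤ, emb x 1 < 0 → C x = atomC)
    (hC : ∀ x : ℤ × ℤ, 0 < emb x 1 → C x = cbC) :
    fCons C ↔
      ((∀ x : ℤ × ℤ, emb x 1 = 0 → C x 0 0 = C (x + ed 1) 3 3) ∧
       (∀ x : ℤ × ℤ, emb x 1 = 0 → ∀ j : Fin 6,
          (j : ℕ) = 1 ∨ (j : ℕ) = 2 ∨ (j : ℕ) = 4 ∨ (j : ℕ) = 5 →
          C x j j = C (x + ed 1) j j)) := by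
  have hregular : ∀ x, oneSided (C x) ∧ eCons (C x) := by
    intro x
    rcases lt_trichotomy (emb x 1) 0 with h | h | h
    · rw [hA x h, atomC_eq_ofReduced]; exact ⟨oneSided_ofReduced _, eCons_ofReduced _⟩
    · exact ⟨hos x h, hec x h⟩
    · rw [hC x h, cbC_eq_ofReduced]; exact ⟨oneSided_ofReduced _, eCons_ofReduced _⟩
  have hneg : ∀ x j, x.2 < 0 → C x j j = 1 := fun x j hx => by
    simp [hA x (emb_snd_neg_iff.mpr hx), atomC]
  have hpos : ∀ x j, 0 < x.2 → C x j j = 2 / 3 := fun x j hx => by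
    simp [hC x (emb_snd_pos_iff.mpr hx), cbC]
  conv_lhs => rw [funext fun x => eq_ofReduced (hregular x).1 (hregular x).2]
  rw [fCons_ofReduced_iff, reducedFlux_balance_iff hneg hpos]
  simp only [emb_snd_eq_zero_iff, forall_snd_eq_zero]
  rfl
end
end
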